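/- Let σ : 𝔻 → ℂ and S : 𝔻 → ℂ be analytic on 𝔻 with σ(𝔻) ⊆ 𝔻, and suppose σ is injective on some nonempty open subset U ⊆ 𝔻. If the kernel K(z, w) = (1 − S(z)·conj(S(w)))/(1 − σ(z)·conj(σ(w))) is positive on U, then there exists a Schur function 𝒮 : 𝔻 → ℂ such that S(z) = 𝒮(σ(z)) for all z ∈ 𝔻. -/

import Mathlib

open Complex Metric

/-- The open unit disk in `ℂ`. -/
def unitDisk : Set ℂ := Metric.ball (0 : ℂ) 1

/-- A kernel `K` is positive on a set `A ⊆ ℂ` if for every finite choice of points in `A`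
and complex coefficients, the associated quadratic form is a nonnegative real number. -/
def IsPosKernel (A : Set ℂ) (K : ℂ → ℂ → ℂ) : Prop :=
  ∀ (n : ℕ) (z : Fin n → ℂ), (∀ i, z i ∈ A) → ∀ c : Fin n → ℂ,
    0 ≤ (∑ i, ∑ j, c i * (starRingEnd ℂ) (c j) * K (z i) (z j)).re ∧
    (∑ i, ∑ j, c i * (starRingEnd ℂ) (c j) * K (z i) (z j)).im = 0

/-- A Schur function: analytic on the open unit disk and bounded by one there. -/
def IsSchur (S : ℂ → ℂ) : Prop :=
  DifferentiableOn ℂ S unitDisk ∧ ∀ z ∈ unitDisk, ‖S z‖ ≤ 1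

/-!
Realize the Hardy space as `ℓ²(ℕ)`, with Szegő kernels `k_w = (w̄ⁿ)ₙ` satisfying
`⟪k_w, k_z⟫ = (1 - w z̄)⁻¹`. Positivity of the kernel says exactly that
`∑ aᵢ k_{σ(zᵢ)} ↦ ∑ aᵢ S̄(zᵢ) k_{σ(zᵢ)}` is a contraction on finite combinations (`zᵢ ∈ U`); these
are dense because `σ(U)` accumulates in the disk, so it extends to a contraction `X`. Its adjoint
`X*` multiplies the functions `ζ ↦ ∑ gₙ ζⁿ` by `𝒮 := X* k₀` on `σ(U)`, hence everywhere by the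
identity theorem, so every `k_ζ` is an eigenvector of `X` with eigenvalue `conj (𝒮 ζ)` and
`|𝒮| ≤ 1`. Finally `S = 𝒮 ∘ σ` on `U`, hence on the disk.
-/

open Filter Function Set Topology ComplexConjugate

theorem mem_unitDisk {w : ℂ} : w ∈ unitDisk ↔ ‖w‖ < 1 := mem_ball_zero_iff

theorem AnalyticOnNhd.eqOn_zero_of_comp_injOn {𝕜 E : Type*} [NontriviallyNormedField 𝕜]
    [NormedAddCommGroup E] [NormedSpace 𝕜 E] {F : 𝕜 → E} {σ : 𝕜 → 𝕜} {D U : Set 𝕜}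
    (hF : AnalyticOnNhd 𝕜 F D) (hD : IsPreconnected D) (hU : IsOpen U) (hUne : U.Nonempty)
    (hσ : ContinuousOn σ U) (hinj : InjOn σ U) (hσU : MapsTo σ U D)
    (h0 : ∀ u ∈ U, F (σ u) = 0) : EqOn F 0 D := by
  obtain ⟨z₀, hz₀⟩ := hUne
  have hU₀ : U ∈ 𝓝 z₀ := hU.mem_nhds hz₀
  have hlim : Tendsto σ (𝓝[≠] z₀) (𝓝[≠] σ z₀) :=
    tendsto_nhdsWithin_of_tendsto_nhds_of_eventually_within _
      ((hσ.continuousAt hU₀).tendsto.mono_left nhdsWithin_le_nhds)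
      (by filter_upwards [nhdsWithin_le_nhds hU₀, self_mem_nhdsWithin] with z hz hne
          using hinj.ne hz hz₀ hne)
  have hfreq : ∃ᶠ z in 𝓝[≠] z₀, F (σ z) = 0 :=
    (eventually_nhdsWithin_of_eventually_nhds (eventually_of_mem hU₀ h0)).frequently
  exact hF.eqOn_zero_of_preconnected_of_frequently_eq_zero hD (hσU hz₀) (hlim.frequently hfreq)

theorem hasFPowerSeriesOnBall_tsum_mul_pow {𝕜 : Type*} [NontriviallyNormedField 𝕜]
    [CompleteSpace 𝕜] {c : ℕ → 𝕜} {C : ℝ} (hc : ∀ n, ‖c n‖ ≤ C) :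
    HasFPowerSeriesOnBall (fun z => ∑' n, c n * z ^ n)
      (FormalMultilinearSeries.ofScalars 𝕜 c) 0 1 := by
  have hrad : 1 ≤ (FormalMultilinearSeries.ofScalars 𝕜 c).radius :=
    FormalMultilinearSeries.le_radius_of_bound _ C fun n => by
      simpa [FormalMultilinearSeries.ofScalars_norm] using hc n
  have := ((FormalMultilinearSeries.ofScalars 𝕜 c).hasFPowerSeriesOnBall
    (zero_lt_one.trans_le hrad)).mono zero_lt_one hrad
  rwa [← FormalMultilinearSeries.ofScalarsSum, FormalMultilinearSeries.ofScalarsSum_eq_tsum]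
    at this

/-- The Hardy space of the disk, in coefficient form: `g` stands for `ζ ↦ ∑ gₙ ζⁿ`. -/
abbrev H2 : Type := lp (fun _ : ℕ => ℂ) 2

noncomputable def hardyEval (g : H2) (ζ : ℂ) : ℂ := ∑' n, g n * ζ ^ n

theorem hasFPowerSeriesOnBall_hardyEval (g : H2) :
    HasFPowerSeriesOnBall (hardyEval g) (FormalMultilinearSeries.ofScalars ℂ (g ·)) 0 1 :=
  hasFPowerSeriesOnBall_tsum_mul_pow fun n => lp.norm_apply_le_norm two_ne_zero g n

theorem analyticOnNhd_hardyEval (g : H2) : AnalyticOnNhd ℂ (hardyEval g) unitDisk := by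
  have := (hasFPowerSeriesOnBall_hardyEval g).analyticOnNhd
  rwa [← ENNReal.coe_one, Metric.eball_coe, NNReal.coe_one] at this

theorem eq_zero_of_hardyEval_eq_zero {g : H2} (h : hardyEval g =ᶠ[𝓝 0] 0) : g = 0 := by
  have := (hasFPowerSeriesOnBall_hardyEval g).hasFPowerSeriesAt.congr h |>.eq_zero
  rw [FormalMultilinearSeries.ofScalars_series_eq_zero] at this
  exact lp.ext this

theorem memℓp_conj_pow {w : ℂ} (hw : w ∈ unitDisk) :
    Memℓp (fun n : ℕ => conj w ^ n) 2 := by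
  refine (memℓp_gen (p := 1) ?_).of_exponent_ge one_le_two
  simpa using summable_geometric_of_lt_one (norm_nonneg w) (mem_unitDisk.1 hw)

def szegoKernel (w : ℂ) (hw : w ∈ unitDisk) : H2 := ⟨fun n => conj w ^ n, memℓp_conj_pow hw⟩

theorem inner_szegoKernel_left {ζ : ℂ} (hζ : ζ ∈ unitDisk) (g : H2) :
    inner ℂ (szegoKernel ζ hζ) g = hardyEval g ζ := by
  rw [lp.inner_eq_tsum, hardyEval]
  refine tsum_congr fun n => ?_
  simp [szegoKernel, RCLike.inner_apply, mul_comm]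

theorem inner_szegoKernel {w z : ℂ} (hw : w ∈ unitDisk) (hz : z ∈ unitDisk) :
    inner ℂ (szegoKernel w hw) (szegoKernel z hz) = (1 - w * conj z)⁻¹ := by
  rw [inner_szegoKernel_left, hardyEval, ← tsum_geometric_of_norm_lt_one]
  · simp [szegoKernel, mul_pow, mul_comm]
  · rw [mem_unitDisk] at hw hz
    rw [norm_mul, RCLike.norm_conj]
    nlinarith [norm_nonneg w, norm_nonneg z]

theorem szegoKernel_ne_zero {w : ℂ} (hw : w ∈ unitDisk) : szegoKernel w hw ≠ 0 := by
  intro h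
  have := congrArg (fun g : H2 => g 0) h
  simp [szegoKernel] at this

theorem IsPosKernel.re_sum_nonneg {A : Set ℂ} {K : ℂ → ℂ → ℂ} (hK : IsPosKernel A K)
    {ι : Type*} (s : Finset ι) (z : ι → ℂ) (hz : ∀ i ∈ s, z i ∈ A) (c : ι → ℂ) :
    0 ≤ (∑ i ∈ s, ∑ j ∈ s, c i * conj (c j) * K (z i) (z j)).re := by
  set e := s.equivFin.symm
  convert (hK s.card (fun i => z (e i)) (fun i => hz _ (e i).2) (fun i => c (e i))).1 using 2
  simp only [← Finset.sum_coe_sort s]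
  rw [← e.sum_comp]
  exact Finset.sum_congr rfl fun i _ => (e.sum_comp _).symm

theorem norm_sq_sum_smul {𝕜 E ι : Type*} [RCLike 𝕜] [NormedAddCommGroup E]
    [InnerProductSpace 𝕜 E] (s : Finset ι) (a : ι → 𝕜) (v : ι → E) :
    ‖∑ i ∈ s, a i • v i‖ ^ 2 =
      RCLike.re (∑ i ∈ s, ∑ j ∈ s, conj (a i) * a j * inner 𝕜 (v i) (v j)) := by
  rw [← inner_self_eq_norm_sq (𝕜 := 𝕜), sum_inner]
  simp only [inner_sum, inner_smul_left, inner_smul_right]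
  congr 1
  exact Finset.sum_congr rfl fun i _ => Finset.sum_congr rfl fun j _ => by ring

theorem norm_le_one_of_apply_eq_smul {𝕜 E : Type*} [NontriviallyNormedField 𝕜]
    [NormedAddCommGroup E] [NormedSpace 𝕜 E] {X : E →L[𝕜] E} (hX : ‖X‖ ≤ 1) {v : E}
    (hv : v ≠ 0) {c : 𝕜} (h : X v = c • v) : ‖c‖ ≤ 1 := by
  refine le_of_mul_le_mul_right ?_ (norm_pos_iff.2 hv)
  calc ‖c‖ * ‖v‖ = ‖X v‖ := by rw [h, norm_smul]
    _ ≤ ‖X‖ * ‖v‖ := X.le_opNorm v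
    _ ≤ 1 * ‖v‖ := by gcongr

section SzegoKernelComp

variable {σ S : ℂ → ℂ} {U : Set ℂ}

theorem dense_span_szegoKernel_comp (hU : IsOpen U) (hUne : U.Nonempty) (hσ : ContinuousOn σ U)
    (hinj : InjOn σ U) (hσU : MapsTo σ U unitDisk) :
    Dense (Submodule.span ℂ (range fun u : U => szegoKernel (σ u) (hσU u.2)) : Set H2) := by
  rw [Submodule.dense_iff_topologicalClosure_eq_top, Submodule.topologicalClosure_eq_top_iff,
    Submodule.eq_bot_iff]
  intro g hg
  have hzero : EqOn (hardyEval g) 0 unitDisk :=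
    (analyticOnNhd_hardyEval g).eqOn_zero_of_comp_injOn (convex_ball 0 1).isPreconnected
      hU hUne hσ hinj hσU fun u hu => by
        rw [← inner_szegoKernel_left (hσU hu)]
        exact (Submodule.mem_orthogonal _ g).1 hg _ (Submodule.subset_span ⟨⟨u, hu⟩, rfl⟩)
  exact eq_zero_of_hardyEval_eq_zero
    (eventually_of_mem (isOpen_ball.mem_nhds (mem_ball_self one_pos)) hzero)

theorem norm_linearCombination_le_of_isPosKernel (hσU : MapsTo σ U unitDisk)
    (hpos : IsPosKernel U fun z w => (1 - S z * conj (S w)) / (1 - σ z * conj (σ w)))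
    (f : U →₀ ℂ) :
    ‖Finsupp.linearCombination ℂ (fun u : U => conj (S u) • szegoKernel (σ u) (hσU u.2)) f‖ ≤
      ‖Finsupp.linearCombination ℂ (fun u : U => szegoKernel (σ u) (hσU u.2)) f‖ := by
  simp only [Finsupp.linearCombination_apply, Finsupp.sum, smul_smul]
  -- `‖A‖² - ‖B‖²` is the quadratic form of the kernel at the coefficients `conj f`.
  have hK := hpos.re_sum_nonneg f.support (fun u => (u : ℂ)) (fun u _ => u.2)
    (fun u => conj (f u))
  rw [← sq_le_sq₀ (norm_nonneg _) (norm_nonneg _), ← sub_nonneg, norm_sq_sum_smul,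
    norm_sq_sum_smul, ← map_sub, ← Finset.sum_sub_distrib]
  refine hK.trans_eq ?_
  rw [RCLike.re_to_complex]
  congr 1
  refine Finset.sum_congr rfl fun u _ => ?_
  rw [← Finset.sum_sub_distrib]
  refine Finset.sum_congr rfl fun w _ => ?_
  simp only [inner_szegoKernel, map_mul, Complex.conj_conj]
  ring

theorem exists_contraction_of_isPosKernel (hσU : MapsTo σ U unitDisk)
    (hdense : Dense (Submodule.span ℂ (range fun u : U => szegoKernel (σ u) (hσU u.2)) : Set H2))
    (hpos : IsPosKernel U fun z w => (1 - S z * conj (S w)) / (1 - σ z * conj (σ w))) :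
    ∃ X : H2 →L[ℂ] H2, ‖X‖ ≤ 1 ∧ ∀ u (hu : u ∈ U),
      X (szegoKernel (σ u) (hσU hu)) = conj (S u) • szegoKernel (σ u) (hσU hu) := by
  set Φ := Finsupp.linearCombination ℂ (fun u : U => szegoKernel (σ u) (hσU u.2))
  set Ψ := Finsupp.linearCombination ℂ (fun u : U => conj (S u) • szegoKernel (σ u) (hσU u.2))
  have hΦ : DenseRange Φ := by
    rwa [DenseRange, ← LinearMap.coe_range, Finsupp.range_linearCombination]
  have hbound : ∀ f, ‖Ψ f‖ ≤ 1 * ‖Φ f‖ := fun f => by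
    rw [one_mul]
    exact norm_linearCombination_le_of_isPosKernel hσU hpos f
  refine ⟨Ψ.extendOfNorm Φ, LinearMap.opNorm_extendOfNorm_le hΦ zero_le_one hbound,
    fun u hu => ?_⟩
  simpa [Φ, Ψ] using LinearMap.extendOfNorm_eq hΦ ⟨1, hbound⟩ (Finsupp.single ⟨u, hu⟩ 1)

theorem exists_isSchur_comp_eq_of_contraction (hU : IsOpen U) (hUne : U.Nonempty)
    (hσ : ContinuousOn σ U) (hinj : InjOn σ U) (hσU : MapsTo σ U unitDisk)
    {X : H2 →L[ℂ] H2} (hX : ‖X‖ ≤ 1) (hXk : ∀ u (hu : u ∈ U),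
      X (szegoKernel (σ u) (hσU hu)) = conj (S u) • szegoKernel (σ u) (hσU hu)) :
    ∃ 𝒮 : ℂ → ℂ, IsSchur 𝒮 ∧ ∀ u ∈ U, S u = 𝒮 (σ u) := by
  have h0 : (0 : ℂ) ∈ unitDisk := mem_unitDisk.2 (by simp)
  set 𝒮 := hardyEval (X.adjoint (szegoKernel 0 h0))
  have hk0 : ∀ ζ ∈ unitDisk, hardyEval (szegoKernel 0 h0) ζ = 1 := fun ζ hζ => by
    rw [← inner_szegoKernel_left hζ, inner_szegoKernel]
    simp
  have hadj : ∀ g, ∀ u ∈ U, hardyEval (X.adjoint g) (σ u) = S u * hardyEval g (σ u) :=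
    fun g u hu => by
      rw [← inner_szegoKernel_left (hσU hu), ContinuousLinearMap.adjoint_inner_right, hXk u hu,
        inner_smul_left, Complex.conj_conj, inner_szegoKernel_left]
  have h𝒮 : ∀ u ∈ U, 𝒮 (σ u) = S u := fun u hu =>
    (hadj _ u hu).trans (by rw [hk0 _ (hσU hu), mul_one])
  have h𝒮an : AnalyticOnNhd ℂ 𝒮 unitDisk := analyticOnNhd_hardyEval _
  have hmul : ∀ g, ∀ ζ ∈ unitDisk, hardyEval (X.adjoint g) ζ = 𝒮 ζ * hardyEval g ζ := by
    intro g ζ hζ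
    have hF := (analyticOnNhd_hardyEval (X.adjoint g)).sub (h𝒮an.mul (analyticOnNhd_hardyEval g))
    refine sub_eq_zero.1 <| hF.eqOn_zero_of_comp_injOn (convex_ball 0 1).isPreconnected
      hU hUne hσ hinj hσU (fun u hu => ?_) hζ
    simp [hadj g u hu, h𝒮 u hu]
  have heig : ∀ ζ (hζ : ζ ∈ unitDisk), X (szegoKernel ζ hζ) = conj (𝒮 ζ) • szegoKernel ζ hζ :=
    fun ζ hζ => ext_inner_right ℂ fun g => by
      rw [← ContinuousLinearMap.adjoint_inner_right, inner_szegoKernel_left, hmul g ζ hζ,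
        inner_smul_left, Complex.conj_conj, inner_szegoKernel_left]
  refine ⟨𝒮, ⟨h𝒮an.differentiableOn, fun ζ hζ => ?_⟩, fun u hu => (h𝒮 u hu).symm⟩
  simpa using norm_le_one_of_apply_eq_smul hX (szegoKernel_ne_zero hζ) (heig ζ hζ)

end SzegoKernelComp

/-- If `σ, S` are analytic on `𝔻` with `σ(𝔻) ⊆ 𝔻`, `σ` is injective on a nonempty open
subset `U ⊆ 𝔻`, and the kernel `(1 - S(z) conj(S(w)))/(1 - σ(z) conj(σ(w)))` is positive
on `U`, then `S = 𝒮 ∘ σ` for some Schur function `𝒮`. -/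
theorem exists_schur_factorization
    (σ S : ℂ → ℂ)
    (hσ : DifferentiableOn ℂ σ unitDisk) (hS : DifferentiableOn ℂ S unitDisk)
    (hσmap : ∀ z ∈ unitDisk, σ z ∈ unitDisk)
    (U : Set ℂ) (hUopen : IsOpen U) (hUne : U.Nonempty) (hUsub : U ⊆ unitDisk)
    (hinj : Set.InjOn σ U)
    (hpos : IsPosKernel U
      (fun z w => (1 - S z * (starRingEnd ℂ) (S w)) / (1 - σ z * (starRingEnd ℂ) (σ w)))) :
    ∃ 𝒮 : ℂ → ℂ, IsSchur 𝒮 ∧ ∀ z ∈ unitDisk, S z = 𝒮 (σ z) := by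
  have hσU : MapsTo σ U unitDisk := fun u hu => hσmap u (hUsub hu)
  have hσc : ContinuousOn σ U := hσ.continuousOn.mono hUsub
  obtain ⟨X, hX, hXk⟩ := exists_contraction_of_isPosKernel hσU
    (dense_span_szegoKernel_comp hUopen hUne hσc hinj hσU) hpos
  obtain ⟨𝒮, h𝒮, hS𝒮⟩ := exists_isSchur_comp_eq_of_contraction hUopen hUne hσc hinj hσU hX hXk
  refine ⟨𝒮, h𝒮, fun z hz => sub_eq_zero.1 ?_⟩
  obtain ⟨z₀, hz₀⟩ := hUne
  have hdiff : AnalyticOnNhd ℂ (fun z => S z - 𝒮 (σ z)) unitDisk :=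
    (hS.analyticOnNhd isOpen_ball).sub
      ((h𝒮.1.analyticOnNhd isOpen_ball).comp (hσ.analyticOnNhd isOpen_ball) hσmap)
  refine hdiff.eqOn_zero_of_preconnected_of_eventuallyEq_zero (convex_ball 0 1).isPreconnected
    (hUsub hz₀) ?_ hz
  filter_upwards [hUopen.mem_nhds hz₀] with u hu using sub_eq_zero.2 (hS𝒮 u hu)
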